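/- Let (A_k)_{k=1,…,K} be a partition of Q into nonempty sets and suppose ν(C) = Σ_{k=1}^K ν_k(C ∩ A_k) for all C ⊆ Q, where each ν_k is a real-valued function on subsets of Q. For a permutation π and j ∈ Q set G_{π,j} = ½ · (ν(C_{π,j} ∪ {j}) − ν(C_{π,j}) + ν(C_{ρ(π),j} ∪ {j}) − ν(C_{ρ(π),j})). Then for all indices j ∈ A_k and l ∈ A_m belonging to different blocks (k ≠ m), the covariance under the uniform distribution on permutations vanishes: (1/q!) · Σ_π (G_{π,j} − φ_j)(G_{π,l} − φ_l) = 0, where φ_j, φ_l are the Shapley values of ν. -/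

import Mathlib

open Finset

/-- Shapley value of player `j` for value function `ν` on coalitions of `Fin q`. -/
noncomputable def shapley {q : ℕ} (ν : Finset (Fin q) → ℝ) (j : Fin q) : ℝ :=
  ((q : ℝ))⁻¹ * ∑ C ∈ (Finset.univ.erase j).powerset,
    (((q - 1).choose C.card : ℝ))⁻¹ * (ν (insert j C) - ν C)

/-- The coalition `C_{π,j}` of players preceding `j` in the permutation `π`,
where `π i` is the player at position `i`. -/
def preceding {q : ℕ} (π : Equiv.Perm (Fin q)) (j : Fin q) : Finset (Fin q) :=
  (Finset.univ.filter (fun i : Fin q => i < π.symm j)).image π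

/-- The reversed permutation `ρ(π) = (π_q, …, π_1)`. -/
def reversedPerm {q : ℕ} (π : Equiv.Perm (Fin q)) : Equiv.Perm (Fin q) :=
  Fin.revPerm.trans π

/-- Paired single-permutation PermutationSHAP estimate. -/
noncomputable def pairedEstimate {q : ℕ} (ν : Finset (Fin q) → ℝ)
    (π : Equiv.Perm (Fin q)) (j : Fin q) : ℝ :=
  (1 / 2 : ℝ) * (ν (insert j (preceding π j)) - ν (preceding π j)
    + ν (insert j (preceding (reversedPerm π) j)) - ν (preceding (reversedPerm π) j))

/-!
For `j ∈ A_k`, additivity reduces both marginal contributions of `j` to `ν_k`, and the reversed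
permutation's predecessor set of `j` is the complement of `C_{π,j} ∪ {j}`; so the paired estimate
of `j` is a function of `C_{π,j} ∩ A_k` alone. For disjoint `A ∋ j` and `B ∋ l`, a permutation is
determined by where it puts the players outside `B` together with the relative order of `B`, and
these two pieces vary independently: re-ordering `B` in `π` as in `τ`, and in `τ` as in `π`, is an
injective map on pairs of permutations. Hence `C_{π,j} ∩ A` and `C_{π,l} ∩ B` are independent
under the uniform distribution and the covariance is the product of the two centred means. The
mean of the paired estimate is the Shapley value, since exactly `|C|! (q-1-|C|)!` permutations
have `C_{π,j} = C`: they form a coset of the stabiliser of a three-valued labelling.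
-/

open Function

section Preceding

variable {q : ℕ}

lemma mem_preceding {π : Equiv.Perm (Fin q)} {j x : Fin q} :
    x ∈ preceding π j ↔ π.symm x < π.symm j := by
  simp only [preceding, mem_image, mem_filter, mem_univ, true_and]
  exact ⟨by rintro ⟨i, hi, rfl⟩; simpa using hi, fun h => ⟨π.symm x, h, π.apply_symm_apply x⟩⟩

lemma card_preceding (π : Equiv.Perm (Fin q)) (j : Fin q) :
    (preceding π j).card = π.symm j := by
  rw [preceding, card_image_of_injective _ π.injective, filter_gt_eq_Iio, Fin.card_Iio]

lemma preceding_reversedPerm (π : Equiv.Perm (Fin q)) (j : Fin q) :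
    preceding (reversedPerm π) j = (insert j (preceding π j))ᶜ := by
  ext x
  simp only [mem_preceding, reversedPerm, Equiv.symm_trans_apply, Fin.revPerm_symm,
    Fin.revPerm_apply, Fin.rev_lt_rev, mem_compl, mem_insert, not_or]
  rw [← π.symm.injective.eq_iff, not_lt]
  exact ⟨fun h => ⟨h.ne', h.le⟩, fun ⟨hne, hle⟩ => lt_of_le_of_ne hle (Ne.symm hne)⟩

lemma preceding_inter_eq_of_lt_iff {A : Finset (Fin q)} {ρ π : Equiv.Perm (Fin q)}
    (h : ∀ x ∈ A, ∀ y ∈ A, ρ.symm x < ρ.symm y ↔ π.symm x < π.symm y) {j : Fin q} (hj : j ∈ A) :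
    preceding ρ j ∩ A = preceding π j ∩ A := by
  ext x
  simp only [mem_inter, mem_preceding]
  exact ⟨fun ⟨hx, hxA⟩ => ⟨(h x hxA j hj).1 hx, hxA⟩, fun ⟨hx, hxA⟩ => ⟨(h x hxA j hj).2 hx, hxA⟩⟩

end Preceding

section Additive

variable {α ι : Type*} [DecidableEq α] [Fintype ι] {𝒜 : ι → Finset α}
  {ν : Finset α → ℝ} {νk : ι → Finset α → ℝ}

lemma marginal_eq_block_marginal (h𝒜 : Pairwise (Disjoint on 𝒜))
    (hν : ∀ C, ν C = ∑ k, νk k (C ∩ 𝒜 k)) {k : ι} {j : α} (hj : j ∈ 𝒜 k) (C : Finset α) :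
    ν (insert j C) - ν C = νk k (insert j (C ∩ 𝒜 k)) - νk k (C ∩ 𝒜 k) := by
  rw [hν, hν, ← sum_sub_distrib, Fintype.sum_eq_single k, insert_inter_of_mem hj]
  intro k' hk'
  rw [insert_inter_of_notMem (disjoint_left.1 (h𝒜 hk'.symm) hj), sub_self]

end Additive

lemma exists_pairedEstimate_eq_comp_preceding_inter {q K : ℕ} {𝒜 : Fin K → Finset (Fin q)}
    (h𝒜 : Pairwise (Disjoint on 𝒜)) {ν : Finset (Fin q) → ℝ} {νk : Fin K → Finset (Fin q) → ℝ}
    (hν : ∀ C, ν C = ∑ k, νk k (C ∩ 𝒜 k)) {k : Fin K} {j : Fin q} (hj : j ∈ 𝒜 k) :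
    ∃ g : Finset (Fin q) → ℝ, ∀ π, pairedEstimate ν π j = g (preceding π j ∩ 𝒜 k) := by
  refine ⟨fun S => (1 / 2 : ℝ) * (νk k (insert j S) - νk k S
    + (νk k (insert j (𝒜 k \ insert j S)) - νk k (𝒜 k \ insert j S))), fun π => ?_⟩
  have hrev : preceding (reversedPerm π) j ∩ 𝒜 k = 𝒜 k \ insert j (preceding π j ∩ 𝒜 k) := by
    rw [preceding_reversedPerm]
    ext x
    simp only [mem_inter, mem_compl, mem_insert, mem_sdiff]
    tauto
  rw [pairedEstimate, add_sub_assoc, marginal_eq_block_marginal h𝒜 hν hj,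
    marginal_eq_block_marginal h𝒜 hν hj, hrev]

section Counting

open Nat

lemma card_perm_comp_eq_of_card_fiber_eq {α ι : Type*} [Fintype α] [DecidableEq α] [Fintype ι]
    [DecidableEq ι] {f g : α → ι}
    (h : ∀ i, Fintype.card {a // f a = i} = Fintype.card {a // g a = i}) :
    Fintype.card {π : Equiv.Perm α // f ∘ π = g} = ∏ i, (Fintype.card {a // g a = i})! := by
  let π₀ : Equiv.Perm α := Equiv.ofFiberEquiv fun i => (Fintype.equivOfCardEq (h i)).symm
  have hπ₀ (a : α) : f (π₀ a) = g a := Equiv.ofFiberEquiv_map _ a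
  simp only [← h, ← DomMulAct.stabilizer_card f]
  refine Fintype.card_congr (Equiv.subtypeEquiv (Equiv.mulRight π₀⁻¹) fun π => ?_)
  simp only [Equiv.coe_mulRight, funext_iff, Function.comp_apply, Equiv.Perm.mul_apply,
    Equiv.Perm.inv_def]
  refine ⟨fun hπ a => ?_, fun hπ a => ?_⟩
  · rw [hπ, ← hπ₀, Equiv.apply_symm_apply]
  · rw [← hπ₀, ← hπ (π₀ a), Equiv.symm_apply_apply]

variable {q : ℕ}

def orderLabel {α : Type*} [DecidableEq α] (C : Finset α) (j x : α) : Ordering :=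
  if x ∈ C then .lt else if x = j then .eq else .gt

lemma preceding_eq_iff {π : Equiv.Perm (Fin q)} {j : Fin q} {C : Finset (Fin q)} (hjC : j ∉ C)
    {t : Fin q} (ht : (t : ℕ) = C.card) :
    preceding π j = C ↔ orderLabel C j ∘ π = (compare · t) := by
  constructor
  · rintro rfl
    have hjt : π.symm j = t := Fin.ext (by rw [ht, card_preceding])
    funext i
    rcases lt_trichotomy i t with h | rfl | h
    · simp [orderLabel, mem_preceding, hjt, h, compare_lt_iff_lt.2 h]
    · simp [orderLabel, mem_preceding, ← hjt]
    · simp [orderLabel, mem_preceding, hjt, h.not_gt, ← Equiv.eq_symm_apply, h.ne',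
        compare_gt_iff_gt.2 h]
  · intro h
    have hx (x : Fin q) : orderLabel C j x = compare (π.symm x) t := by
      simpa using congrFun h (π.symm x)
    have hjt : π.symm j = t := by
      rw [← compare_eq_iff_eq, ← hx]
      simp [orderLabel, hjC]
    ext x
    rw [mem_preceding, hjt, ← compare_lt_iff_lt, ← hx, orderLabel]
    split_ifs <;> simp_all

lemma card_orderLabel_fiber {j : Fin q} {C : Finset (Fin q)} (hjC : j ∉ C) {t : Fin q}
    (ht : (t : ℕ) = C.card) (o : Ordering) :
    Fintype.card {x // orderLabel C j x = o} = Fintype.card {i // compare i t = o} := by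
  cases o
  · simp [Fintype.card_subtype, orderLabel, compare_lt_iff_lt, filter_gt_eq_Iio, ht]
  · have hx (x : Fin q) : orderLabel C j x = .eq ↔ x = j := by
      by_cases hx : x ∈ C
      · simp [orderLabel, hx, ne_of_mem_of_not_mem hx hjC]
      · simp [orderLabel, hx]
    simp only [hx, compare_eq_iff_eq, Fintype.card_subtype_eq]
  · have hcompl : univ.filter (orderLabel C j · = .gt) = (insert j C)ᶜ := by
      ext x
      by_cases hx : x ∈ C <;> simp [orderLabel, hx]
    rw [Fintype.card_subtype, Fintype.card_subtype, hcompl, card_compl, card_insert_of_notMem hjC]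
    simp only [Fintype.card_fin, compare_gt_iff_gt, filter_lt_eq_Ioi, Fin.card_Ioi, ht]
    omega

lemma prod_factorial_card_compare_fiber (t : Fin q) :
    ∏ o, (Fintype.card {i // compare i t = o})! = (t : ℕ)! * (q - 1 - t)! := by
  rw [show (univ : Finset Ordering) = {.lt, .eq, .gt} from rfl, prod_insert (by decide),
    prod_insert (by decide), prod_singleton]
  simp only [compare_lt_iff_lt, compare_eq_iff_eq, compare_gt_iff_gt, Fintype.card_subtype_eq]
  simp only [Fintype.card_subtype, filter_gt_eq_Iio, filter_lt_eq_Ioi, Fin.card_Iio, Fin.card_Ioi,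
    factorial_one, one_mul]

lemma card_filter_preceding_eq {j : Fin q} {C : Finset (Fin q)} (hjC : j ∉ C) :
    #{π : Equiv.Perm (Fin q) | preceding π j = C} = C.card ! * (q - 1 - C.card)! := by
  have hC : C.card < q := by simpa using card_lt_univ_of_notMem hjC
  let t : Fin q := ⟨C.card, hC⟩
  rw [← Fintype.card_subtype]
  simp_rw [preceding_eq_iff hjC (t := t) rfl]
  rw [card_perm_comp_eq_of_card_fiber_eq (card_orderLabel_fiber hjC rfl),
    prod_factorial_card_compare_fiber]

lemma sum_comp_preceding (f : Finset (Fin q) → ℝ) (j : Fin q) :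
    ∑ π : Equiv.Perm (Fin q), f (preceding π j)
      = ∑ C ∈ (univ.erase j).powerset, (C.card ! * (q - 1 - C.card)! : ℝ) * f C := by
  have hmaps (π : Equiv.Perm (Fin q)) : preceding π j ∈ (univ.erase j).powerset := by
    simp only [mem_powerset, subset_iff, mem_preceding, mem_erase, mem_univ, and_true]
    rintro x hx rfl
    exact lt_irrefl _ hx
  rw [← sum_fiberwise_of_maps_to fun π _ => hmaps π]
  refine sum_congr rfl fun C hC => ?_
  have hjC : j ∉ C := fun h => by simpa using mem_powerset.1 hC h
  rw [sum_congr rfl fun π hπ => by rw [(mem_filter.1 hπ).2], sum_const, nsmul_eq_mul,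
    card_filter_preceding_eq hjC]
  push_cast
  rfl

lemma factorial_mul_factorial_eq_shapley_weight {c : ℕ} (hc : c < q) :
    (c ! * (q - 1 - c)! : ℝ) = q ! * ((q : ℝ)⁻¹ * ((q - 1).choose c : ℝ)⁻¹) := by
  obtain ⟨n, rfl⟩ : ∃ n, q = n + 1 := ⟨q - 1, by omega⟩
  rw [add_tsub_cancel_right, factorial_succ,
    ← choose_mul_factorial_mul_factorial (le_of_lt_succ hc)]
  have : (n.choose c : ℝ) ≠ 0 := by exact_mod_cast (choose_pos (le_of_lt_succ hc)).ne'
  push_cast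
  field_simp

lemma sum_marginal_preceding (ν : Finset (Fin q) → ℝ) (j : Fin q) :
    ∑ π : Equiv.Perm (Fin q), (ν (insert j (preceding π j)) - ν (preceding π j))
      = q ! * shapley ν j := by
  rw [sum_comp_preceding (fun C => ν (insert j C) - ν C), shapley, mul_sum, mul_sum]
  refine sum_congr rfl fun C hC => ?_
  have hjC : j ∉ C := fun h => by simpa using mem_powerset.1 hC h
  rw [factorial_mul_factorial_eq_shapley_weight (by simpa using card_lt_univ_of_notMem hjC)]
  ring

lemma sum_pairedEstimate (ν : Finset (Fin q) → ℝ) (j : Fin q) :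
    ∑ π : Equiv.Perm (Fin q), pairedEstimate ν π j = q ! * shapley ν j := by
  set Δ : Equiv.Perm (Fin q) → ℝ := fun π => ν (insert j (preceding π j)) - ν (preceding π j)
  have hrev : ∑ π, Δ (reversedPerm π) = ∑ π, Δ π :=
    Equiv.sum_comp (Equiv.mulRight Fin.revPerm) Δ
  simp only [pairedEstimate, add_sub_assoc, ← mul_sum, sum_add_distrib]
  rw [hrev, sum_marginal_preceding]
  ring

end Counting

section Reorder

variable {q : ℕ} (B : Finset (Fin q))

noncomputable def rankIn (π : Equiv.Perm (Fin q)) : {x // x ∈ B} ≃ Fin B.card :=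
  (π.symm.subtypeEquiv fun x => by simp).trans
    ((B.map π.symm.toEmbedding).orderIsoOfFin (card_map _)).symm.toEquiv

lemma rankIn_lt_rankIn_iff (π : Equiv.Perm (Fin q)) {x y : {x // x ∈ B}} :
    rankIn B π x < rankIn B π y ↔ π.symm x < π.symm y := by
  simp [rankIn, ← Subtype.coe_lt_coe]

/-- `reorderOn B π τ` places the players outside `B` where `π` does, and fills the positions that
`π` gives to `B` with the players of `B` in their relative order under `τ`. -/
noncomputable def reorderOn (π τ : Equiv.Perm (Fin q)) : Equiv.Perm (Fin q) :=
  (Equiv.subtypeCongr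
    ((rankIn B τ).trans ((B.map π.symm.toEmbedding).orderIsoOfFin (card_map _)).toEquiv)
    (π.symm.subtypeEquiv fun x => by simp)).symm

variable {B}

lemma reorderOn_symm_apply_of_notMem (π τ : Equiv.Perm (Fin q)) {x : Fin q} (hx : x ∉ B) :
    (reorderOn B π τ).symm x = π.symm x := by
  simp [reorderOn, Equiv.subtypeCongr, hx]

lemma reorderOn_symm_lt_iff (π τ : Equiv.Perm (Fin q)) {x y : Fin q} (hx : x ∈ B) (hy : y ∈ B) :
    (reorderOn B π τ).symm x < (reorderOn B π τ).symm y ↔ τ.symm x < τ.symm y := by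
  simp only [reorderOn, Equiv.symm_symm]
  simp only [Equiv.subtypeCongr, Equiv.trans_apply, Equiv.sumCompl_symm_apply_of_pos, hx, hy,
    Equiv.sumCongr_apply, Equiv.coe_trans, RelIso.coe_fn_toEquiv, Sum.map_inl, comp_apply,
    Equiv.sumCompl_apply_inl, coe_orderIsoOfFin_apply, OrderEmbedding.lt_iff_lt]
  exact rankIn_lt_rankIn_iff B τ

lemma Equiv.Perm.eq_of_symm_eq_of_lt_iff {ρ π : Equiv.Perm (Fin q)}
    (hoff : ∀ x ∉ B, ρ.symm x = π.symm x)
    (hon : ∀ x ∈ B, ∀ y ∈ B, ρ.symm x < ρ.symm y ↔ π.symm x < π.symm y) : ρ = π := by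
  have hmem (i : Fin q) : ρ i ∈ B ↔ π i ∈ B := by
    refine ⟨fun h => not_not.1 fun h' => ?_, fun h => not_not.1 fun h' => ?_⟩
    · have := hoff _ h'
      rw [Equiv.symm_apply_apply, Equiv.symm_apply_eq] at this
      exact h' (this ▸ h)
    · have := hoff _ h'
      rw [Equiv.symm_apply_apply, eq_comm, Equiv.symm_apply_eq] at this
      exact h' (this ▸ h)
  set S := univ.filter (π · ∈ B)
  have hS : ∀ s ∈ S, ρ.symm (π s) = s := by
    have hB (r : Fin S.card) : π (S.orderEmbOfFin rfl r) ∈ B :=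
      (mem_filter.1 (S.orderEmbOfFin_mem rfl r)).2
    have hunique := orderEmbOfFin_unique (s := S) rfl
      (f := fun r => ρ.symm (π (S.orderEmbOfFin rfl r)))
      (fun r => by simpa [S, ← hmem] using hB r)
      (fun r r' h => (hon _ (hB r) _ (hB r')).2 (by simpa using (S.orderEmbOfFin rfl).strictMono h))
    intro s hs
    obtain ⟨r, rfl⟩ : s ∈ Set.range (S.orderEmbOfFin rfl) := by
      rw [range_orderEmbOfFin]; exact hs
    exact congrFun hunique r
  refine Equiv.symm_bijective.injective (Equiv.ext fun x => ?_)
  by_cases hx : x ∈ B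
  · simpa using hS (π.symm x) (by simp [S, hx])
  · exact hoff x hx

lemma injective_reorderOn_pair :
    Injective fun p : Equiv.Perm (Fin q) × Equiv.Perm (Fin q) =>
      (reorderOn B p.1 p.2, reorderOn B p.2 p.1) := by
  rintro ⟨π, τ⟩ ⟨π', τ'⟩ h
  simp only [Prod.mk.injEq] at h
  obtain ⟨h₁, h₂⟩ := h
  have hoff {π τ π' τ' : Equiv.Perm (Fin q)} (h : reorderOn B π τ = reorderOn B π' τ') (x : Fin q)
      (hx : x ∉ B) : π.symm x = π'.symm x := by
    rw [← reorderOn_symm_apply_of_notMem π τ hx, h, reorderOn_symm_apply_of_notMem π' τ' hx]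
  have hon {π τ π' τ' : Equiv.Perm (Fin q)} (h : reorderOn B τ π = reorderOn B τ' π')
      (x : Fin q) (hx : x ∈ B) (y : Fin q) (hy : y ∈ B) :
      π.symm x < π.symm y ↔ π'.symm x < π'.symm y := by
    rw [← reorderOn_symm_lt_iff τ π hx hy, h, reorderOn_symm_lt_iff τ' π' hx hy]
  exact Prod.ext (Equiv.Perm.eq_of_symm_eq_of_lt_iff (hoff h₁) (hon h₂))
    (Equiv.Perm.eq_of_symm_eq_of_lt_iff (hoff h₂) (hon h₁))

lemma sum_mul_sum_preceding_inter {A : Finset (Fin q)} (hAB : Disjoint A B) {j l : Fin q}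
    (hj : j ∈ A) (hl : l ∈ B) (f h : Finset (Fin q) → ℝ) :
    (∑ π : Equiv.Perm (Fin q), f (preceding π j ∩ A)) * ∑ π, h (preceding π l ∩ B)
      = q.factorial * ∑ π, f (preceding π j ∩ A) * h (preceding π l ∩ B) := by
  set G : Equiv.Perm (Fin q) → ℝ := fun ρ => f (preceding ρ j ∩ A) * h (preceding ρ l ∩ B)
  have hG (π τ : Equiv.Perm (Fin q)) :
      f (preceding π j ∩ A) * h (preceding τ l ∩ B) = G (reorderOn B π τ) := by
    have hA : ∀ x ∈ A, ∀ y ∈ A, (reorderOn B π τ).symm x < (reorderOn B π τ).symm y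
        ↔ π.symm x < π.symm y := fun x hx y hy => by
      rw [reorderOn_symm_apply_of_notMem π τ (disjoint_left.1 hAB hx),
        reorderOn_symm_apply_of_notMem π τ (disjoint_left.1 hAB hy)]
    show _ = f (preceding (reorderOn B π τ) j ∩ A) * h (preceding (reorderOn B π τ) l ∩ B)
    rw [preceding_inter_eq_of_lt_iff hA hj,
      preceding_inter_eq_of_lt_iff (fun x hx y hy => reorderOn_symm_lt_iff π τ hx hy) hl]
  calc (∑ π, f (preceding π j ∩ A)) * ∑ π, h (preceding π l ∩ B)
      = ∑ p : Equiv.Perm (Fin q) × Equiv.Perm (Fin q), G (reorderOn B p.1 p.2) := by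
        rw [sum_mul_sum, ← Fintype.sum_prod_type']
        exact sum_congr rfl fun p _ => hG p.1 p.2
    _ = ∑ p : Equiv.Perm (Fin q) × Equiv.Perm (Fin q), G p.1 :=
        Fintype.sum_bijective _ (Finite.injective_iff_bijective.1 injective_reorderOn_pair) _ _
          fun _ => rfl
    _ = q.factorial * ∑ π, G π := by
        simp only [Fintype.sum_prod_type, sum_const, card_univ, Fintype.card_perm,
          Fintype.card_fin, nsmul_eq_mul, ← mul_sum]

end Reorder

theorem paired_permutationSHAP_block_uncorrelated_general (q K : ℕ)
    (𝒜 : Fin K → Finset (Fin q))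
    (hdisj : ∀ k l, k ≠ l → Disjoint (𝒜 k) (𝒜 l))
    (ν : Finset (Fin q) → ℝ) (νk : Fin K → Finset (Fin q) → ℝ)
    (hν : ∀ C : Finset (Fin q), ν C = ∑ k, νk k (C ∩ 𝒜 k))
    (k m : Fin K) (hkm : k ≠ m) (j l : Fin q)
    (hj : j ∈ 𝒜 k) (hl : l ∈ 𝒜 m) :
    ((Nat.factorial q : ℝ))⁻¹ *
        ∑ π : Equiv.Perm (Fin q),
          (pairedEstimate ν π j - shapley ν j)
            * (pairedEstimate ν π l - shapley ν l)
      = 0 := by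
  have h𝒜 : Pairwise (Disjoint on 𝒜) := fun a b hab => hdisj a b hab
  obtain ⟨g, hg⟩ := exists_pairedEstimate_eq_comp_preceding_inter h𝒜 hν hj
  obtain ⟨g', hg'⟩ := exists_pairedEstimate_eq_comp_preceding_inter h𝒜 hν hl
  have hcentered : ∑ π : Equiv.Perm (Fin q), (pairedEstimate ν π j - shapley ν j) = 0 := by
    rw [sum_sub_distrib, sum_pairedEstimate, sum_const, card_univ, Fintype.card_perm,
      Fintype.card_fin, nsmul_eq_mul, sub_self]
  have hindep := sum_mul_sum_preceding_inter (hdisj k m hkm) hj hl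
    (fun S => g S - shapley ν j) (fun S => g' S - shapley ν l)
  simp only [← hg, ← hg', hcentered, zero_mul] at hindep
  rw [(mul_eq_zero.1 hindep.symm).resolve_left (by positivity), mul_zero]

/-- under the additive decomposition, paired estimates of players
from different blocks are uncorrelated under the uniform distribution on
permutations. -/
theorem paired_permutationSHAP_block_uncorrelated (q K : ℕ) (hq : 1 ≤ q)
    (𝒜 : Fin K → Finset (Fin q))
    (hne : ∀ k, (𝒜 k).Nonempty)
    (hdisj : ∀ k l, k ≠ l → Disjoint (𝒜 k) (𝒜 l))
    (hcover : Finset.univ.biUnion 𝒜 = (Finset.univ : Finset (Fin q)))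
    (ν : Finset (Fin q) → ℝ) (νk : Fin K → Finset (Fin q) → ℝ)
    (hν : ∀ C : Finset (Fin q), ν C = ∑ k, νk k (C ∩ 𝒜 k))
    (k m : Fin K) (hkm : k ≠ m) (j l : Fin q)
    (hj : j ∈ 𝒜 k) (hl : l ∈ 𝒜 m) :
    ((Nat.factorial q : ℝ))⁻¹ *
        ∑ π : Equiv.Perm (Fin q),
          (pairedEstimate ν π j - shapley ν j)
            * (pairedEstimate ν π l - shapley ν l)
      = 0 :=
  paired_permutationSHAP_block_uncorrelated_general q K 𝒜 hdisj ν νk hν k m hkm j l hj hl
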